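/- arXiv:2403.19569 — 5 statements merged into one kernel-verified Lean document; each statement's English description precedes it below -/
import Mathlib

section
/- Let (σ, α) be a hypermap on {1,...,n}, i.e., σ and α are permutations of {1,...,n} generating a transitive subgroup of the symmetric group. Define the genus g(σ,α) by n + 2 - 2·g(σ,α) = z(σ) + z(α) + z(α⁻¹σ), where z(π) is the number of cycles of π. If z(σ) = 1 and z(α⁻¹σ) = 1 and α has no fixed points, then 2·g(σ,α) + 1 ≤ n ≤ 4·g(σ,α). -/
/-- A permutation is circular if it is a single cycle moving every point. -/
def IsCircular {β : Type*} [DecidableEq β] [Fintype β] (σ : Equiv.Perm β) : Prop :=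
  σ.IsCycle ∧ σ.support = Finset.univ

/-- The number of cycles of a permutation, counting fixed points as cycles. -/
def numCycles {β : Type*} [DecidableEq β] [Fintype β] (π : Equiv.Perm β) : ℕ :=
  Multiset.card π.cycleType + (Fintype.card β - π.support.card)

theorem genus_bound {n g : ℕ} (σ α : Equiv.Perm (Fin n))
    (htrans : ∀ x y : Fin n,
      ∃ p ∈ Subgroup.closure ({σ, α} : Set (Equiv.Perm (Fin n))), p x = y)
    (hgenus : n + 2 = numCycles σ + numCycles α + numCycles (α⁻¹ * σ) + 2 * g)
    (hσ : numCycles σ = 1) (hface : numCycles (α⁻¹ * σ) = 1)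
    (hred : ∀ x, α x ≠ x) :
    2 * g + 1 ≤ n ∧ n ≤ 4 * g := by
  have hne : α ≠ 1 := by
    intro h
    have hn0 : n = 0 := by
      by_contra hn
      exact hred ⟨0, Nat.pos_of_ne_zero hn⟩ (by simp [h])
    subst hn0
    simp [numCycles, Equiv.Perm.cycleType_eq_zero.2 (Subsingleton.elim σ 1)] at hσ
  have hsupp : α.support = Finset.univ := by
    ext x; simp [Equiv.Perm.mem_support, hred x]
  have hcard : α.support.card = n := by simp [hsupp]
  have hnum : numCycles α = Multiset.card α.cycleType := by
    simp [numCycles, hcard]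
  have hsum : α.cycleType.sum = n := by rw [Equiv.Perm.sum_cycleType, hcard]
  have h2 : 2 * Multiset.card α.cycleType ≤ n := by
    calc 2 * Multiset.card α.cycleType = Multiset.card α.cycleType * 2 := by ring
    _ ≤ α.cycleType.sum := Multiset.card_nsmul_le_sum (fun x hx => α.two_le_of_mem_cycleType hx)
    _ = n := hsum
  have h1 : 1 ≤ Multiset.card α.cycleType := by
    rw [Nat.one_le_iff_ne_zero, Ne, Multiset.card_eq_zero, Equiv.Perm.cycleType_eq_zero]
    exact hne
  omega
end

section
/- For n ≥ 2 and 1 ≤ k ≤ n/2, the number r(n,k) of fixed-point-free permutations α of {1,...,n} with exactly k cycles such that α⁻¹·(1,2,...,n) is an n-cycle satisfies r(n,k) = ∑_{i=0}^{k-1} (−1)^i · binom(n,i) · H(n−i, k−i), where H(m,j) is the number of m-cycles ψ of an m-element set such that the product of the standard m-cycle with ψ has exactly j cycles. -/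
/-- The number of m-cycle products of the standard m-cycle with j cycles
(Hultman-type count, phrased via α). -/
noncomputable def H (m j : ℕ) : ℕ :=
  Nat.card {α : Equiv.Perm (Fin m) //
    numCycles α = j ∧ IsCircular (α⁻¹ * finRotate m)}

/-- The number of reduced unicellular hypermonopoles on n points with k
hyperedges. -/
noncomputable def r (n k : ℕ) : ℕ :=
  Nat.card {α : Equiv.Perm (Fin n) //
    (∀ x, α x ≠ x) ∧ numCycles α = k ∧ IsCircular (α⁻¹ * finRotate n)}

open Equiv Equiv.Perm Finset
set_option linter.unusedSectionVars false

section Transport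

variable {β γ : Type*} [DecidableEq β] [Fintype β] [DecidableEq γ] [Fintype γ]

lemma permCongr_mul' (e : β ≃ γ) (a b : Perm β) :
    e.permCongr (a * b) = e.permCongr a * e.permCongr b := by
  ext x; simp [Equiv.permCongr_apply, Equiv.Perm.mul_apply]

lemma permCongr_one' (e : β ≃ γ) : e.permCongr (1 : Perm β) = 1 := by
  ext x; simp [Equiv.permCongr_apply]

lemma permCongr_inv' (e : β ≃ γ) (a : Perm β) :
    e.permCongr a⁻¹ = (e.permCongr a)⁻¹ := by
  apply eq_inv_of_mul_eq_one_left
  rw [← permCongr_mul', inv_mul_cancel, permCongr_one']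

lemma permCongr_symm_permCongr (e : β ≃ γ) (g : Perm β) :
    e.symm.permCongr (e.permCongr g) = g := by
  ext x; simp [Equiv.permCongr_apply]

lemma permCongr_eq_extendDomain (e : β ≃ γ) (g : Perm β) :
    e.permCongr g = g.extendDomain
      (e.trans (Equiv.subtypeUnivEquiv (fun _ : γ => trivial : ∀ _ : γ, (fun _ : γ => True) _)).symm) := by
  ext x
  rw [Perm.extendDomain_apply_subtype _ _ trivial]
  simp [Equiv.subtypeUnivEquiv, Equiv.permCongr_apply]

lemma cycleType_permCongr' (e : β ≃ γ) (g : Perm β) :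
    (e.permCongr g).cycleType = g.cycleType := by
  rw [permCongr_eq_extendDomain]; exact Equiv.Perm.cycleType_extendDomain _

lemma card_support_permCongr' (e : β ≃ γ) (g : Perm β) :
    (e.permCongr g).support.card = g.support.card := by
  rw [permCongr_eq_extendDomain]; exact Equiv.Perm.card_support_extend_domain _

lemma numCycles_permCongr' (e : β ≃ γ) (g : Perm β) :
    numCycles (e.permCongr g) = numCycles g := by
  unfold numCycles
  rw [cycleType_permCongr', card_support_permCongr', Fintype.card_congr e]

lemma isCircular_permCongr' (e : β ≃ γ) (g : Perm β) (h : IsCircular g) :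
    IsCircular (e.permCongr g) := by
  constructor
  · rw [permCongr_eq_extendDomain]; exact h.1.extendDomain _
  · apply Finset.eq_univ_of_card
    rw [card_support_permCongr', h.2, Finset.card_univ]
    exact Fintype.card_congr e

lemma isCircular_permCongr_iff (e : β ≃ γ) (g : Perm β) :
    IsCircular (e.permCongr g) ↔ IsCircular g := by
  refine ⟨fun h => ?_, isCircular_permCongr' e g⟩
  have := isCircular_permCongr' e.symm _ h
  rwa [permCongr_symm_permCongr] at this

lemma count_transport (e : β ≃ γ) (σβ : Perm β) (j : ℕ) :
    Nat.card {α : Perm β // numCycles α = j ∧ IsCircular (α⁻¹ * σβ)} =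
    Nat.card {α : Perm γ // numCycles α = j ∧ IsCircular (α⁻¹ * e.permCongr σβ)} := by
  apply Nat.card_congr
  refine Equiv.subtypeEquiv e.permCongr fun α => ?_
  rw [numCycles_permCongr', ← permCongr_inv', ← permCongr_mul', isCircular_permCongr_iff]

lemma card_eq_H (σβ : Perm β) (hσ : IsCircular σβ) {m : ℕ}
    (hm : Fintype.card β = m) (h2 : 2 ≤ m) (j : ℕ) :
    Nat.card {α : Perm β // numCycles α = j ∧ IsCircular (α⁻¹ * σβ)} = H m j := by
  let e := Fintype.equivFinOfCardEq hm
  rw [count_transport e σβ j]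
  have hψc : IsCircular (e.permCongr σβ) := isCircular_permCongr' _ _ hσ
  have hrot : IsCircular (finRotate m) :=
    ⟨isCycle_finRotate_of_le h2, support_finRotate_of_le h2⟩
  obtain ⟨c, hc⟩ := isConj_iff.mp (hψc.1.isConj hrot.1 (by rw [hψc.2, hrot.2]))
  have hcc : (c : Perm (Fin m)).permCongr (e.permCongr σβ) = finRotate m := by
    rw [Equiv.permCongr_eq_mul]; exact hc
  rw [count_transport c (e.permCongr σβ) j, hcc]
  rfl

end Transport
section FirstReturn

variable {β : Type*} [DecidableEq β] [Fintype β]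

lemma trans_of_isCircular {τ : Equiv.Perm β} (h : IsCircular τ) (x y : β) :
    ∃ j : ℕ, (τ ^ j) x = y := by
  have hx : τ x ≠ x := mem_support.mp (h.2.symm ▸ Finset.mem_univ x)
  have hy : τ y ≠ y := mem_support.mp (h.2.symm ▸ Finset.mem_univ y)
  exact h.1.exists_pow_eq hx hy

lemma isCircular_of_trans {τ : Equiv.Perm β} (h2 : 2 ≤ Fintype.card β)
    (h : ∀ x y : β, ∃ j : ℕ, (τ ^ j) x = y) : IsCircular τ := by
  have hmove : ∀ z, τ z ≠ z := by
    intro z hz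
    have hfix : ∀ j : ℕ, (τ ^ j) z = z := by
      intro j; induction j with
      | zero => rfl
      | succ j ih => rw [pow_succ', Perm.mul_apply, ih, hz]
    obtain ⟨a, b, hab⟩ := Fintype.exists_pair_of_one_lt_card h2
    have hw : ∃ w, w ≠ z := by
      rcases eq_or_ne a z with rfl | hne
      · exact ⟨b, hab.symm⟩
      · exact ⟨a, hne⟩
    obtain ⟨w, hw⟩ := hw
    obtain ⟨j, hj⟩ := h z w
    rw [hfix j] at hj
    exact hw hj.symm
  have hne : Nonempty β := Fintype.card_pos_iff.mp (by omega)
  obtain ⟨x⟩ := hne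
  constructor
  · exact ⟨x, hmove x, fun y _ => by
      obtain ⟨j, hj⟩ := h x y
      exact ⟨(j : ℤ), by simpa using hj⟩⟩
  · exact Finset.eq_univ_iff_forall.mpr fun z => mem_support.mpr (hmove z)

variable (τ : Equiv.Perm β) (S : Finset β)

lemma frAux (x : {x : β // x ∉ S}) : ∃ t : ℕ, (τ ^ (t + 1)) (x : β) ∉ S :=
  ⟨orderOf τ - 1, by
    rw [Nat.sub_add_cancel (orderOf_pos τ), pow_orderOf_eq_one]
    simpa using x.2⟩

def frFun (x : {x : β // x ∉ S}) : {x : β // x ∉ S} :=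
  ⟨(τ ^ (Nat.find (frAux τ S x) + 1)) (x : β), Nat.find_spec (frAux τ S x)⟩

lemma frFun_injective : Function.Injective (frFun τ S) := by
  have key : ∀ x y : {x : β // x ∉ S},
      Nat.find (frAux τ S x) ≤ Nat.find (frAux τ S y) →
      frFun τ S x = frFun τ S y → x = y := by
    intro x y hle h
    set dx := Nat.find (frAux τ S x) with hdx
    set dy := Nat.find (frAux τ S y) with hdy
    have h' : (τ ^ (dx + 1)) (x : β) = (τ ^ (dy + 1)) (y : β) := congrArg Subtype.val h
    have hsplit : (τ : Equiv.Perm β) ^ (dy + 1) = τ ^ (dx + 1) * τ ^ (dy - dx) := by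
      rw [← pow_add]; congr 1; omega
    rw [hsplit, Perm.mul_apply] at h'
    have hxy : (x : β) = (τ ^ (dy - dx)) (y : β) := (τ ^ (dx + 1)).injective h'
    rcases Nat.eq_or_lt_of_le hle with heq | hlt
    · rw [← heq, Nat.sub_self, pow_zero] at hxy
      exact Subtype.ext (by simpa using hxy)
    · exfalso
      have ht : dy - dx - 1 < dy := by omega
      have hmin := Nat.find_min (frAux τ S y) ht
      rw [show dy - dx - 1 + 1 = dy - dx by omega, not_not] at hmin
      rw [← hxy] at hmin
      exact x.2 hmin
  intro x y h
  rcases le_total (Nat.find (frAux τ S x)) (Nat.find (frAux τ S y)) with hle | hle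
  · exact key x y hle h
  · exact (key y x hle h.symm).symm

noncomputable def fr : Equiv.Perm {x : β // x ∉ S} :=
  Equiv.ofBijective _ (Finite.injective_iff_bijective.mp (frFun_injective τ S))

lemma fr_coe (x : {x : β // x ∉ S}) :
    ((fr τ S x : {x : β // x ∉ S}) : β) = (τ ^ (Nat.find (frAux τ S x) + 1)) (x : β) := rfl

lemma exists_fr_pow (x : {x : β // x ∉ S}) :
    ∀ j : ℕ, (τ ^ j) (x : β) ∉ S → ∃ t : ℕ, (((fr τ S ^ t) x : {x : β // x ∉ S}) : β) = (τ ^ j) (x : β) := by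
  intro j
  induction j using Nat.strong_induction_on with
  | _ j IH =>
  intro hj
  rcases Nat.eq_zero_or_pos j with rfl | hj0
  · exact ⟨0, by simp⟩
  · set P : ℕ → Prop := fun i => (τ ^ i) (x : β) ∉ S with hP
    have hP0 : P 0 := by simpa [hP] using x.2
    set M := Nat.findGreatest P (j - 1) with hM
    have hPM : P M := Nat.findGreatest_spec (Nat.zero_le _) hP0
    have hMlt : M < j := lt_of_le_of_lt (Nat.findGreatest_le _) (by omega)
    have hgap : ∀ i, M < i → i < j → (τ ^ i) (x : β) ∈ S := by
      intro i h1 h2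
      by_contra hin
      exact (Nat.findGreatest_is_greatest h1 (by omega) : ¬ P i) hin
    obtain ⟨t0, ht0⟩ := IH M hMlt hPM
    set z : {x : β // x ∉ S} := ⟨(τ ^ M) (x : β), hPM⟩ with hz
    have hfind : Nat.find (frAux τ S z) = j - M - 1 := by
      rw [Nat.find_eq_iff]
      constructor
      · have he : (τ ^ (j - M - 1 + 1)) ((z : β)) = (τ ^ j) (x : β) := by
          show (τ ^ (j - M - 1 + 1)) ((τ ^ M) (x : β)) = _
          rw [← Perm.mul_apply, ← pow_add, show j - M - 1 + 1 + M = j by omega]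
        rw [he]; exact hj
      · intro t ht
        rw [not_not]
        have he : (τ ^ (t + 1)) ((z : β)) = (τ ^ (t + 1 + M)) (x : β) := by
          show (τ ^ (t + 1)) ((τ ^ M) (x : β)) = _
          rw [← Perm.mul_apply, ← pow_add]
        rw [he]
        exact hgap (t + 1 + M) (by omega) (by omega)
    refine ⟨t0 + 1, ?_⟩
    have hzz : (fr τ S ^ t0) x = z := Subtype.ext ht0
    rw [pow_succ', Perm.mul_apply, hzz, fr_coe, hfind]
    show (τ ^ (j - M - 1 + 1)) ((τ ^ M) (x : β)) = _
    rw [← Perm.mul_apply, ← pow_add, show j - M - 1 + 1 + M = j by omega]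

lemma fr_pow_coe (x : {x : β // x ∉ S}) (t : ℕ) :
    ∃ j : ℕ, (((fr τ S ^ t) x : {x : β // x ∉ S}) : β) = (τ ^ j) (x : β) := by
  induction t with
  | zero => exact ⟨0, by simp⟩
  | succ t IH =>
    obtain ⟨j, hj⟩ := IH
    set w := (fr τ S ^ t) x with hw
    refine ⟨Nat.find (frAux τ S w) + 1 + j, ?_⟩
    rw [pow_succ', Perm.mul_apply, ← hw, fr_coe]
    generalize Nat.find (frAux τ S w) = d
    rw [hj, ← Perm.mul_apply, ← pow_add]

lemma fr_trans {τ : Equiv.Perm β} (h : ∀ x y : β, ∃ j : ℕ, (τ ^ j) x = y) :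
    ∀ x y : {x : β // x ∉ S}, ∃ t : ℕ, (fr τ S ^ t) x = y := by
  intro x y
  obtain ⟨j, hj⟩ := h (x : β) (y : β)
  have hmem : (τ ^ j) (x : β) ∉ S := hj ▸ y.2
  obtain ⟨t, ht⟩ := exists_fr_pow τ S x j hmem
  exact ⟨t, Subtype.ext (ht.trans hj)⟩

lemma trans_of_fr {τ : Equiv.Perm β} (hmeet : ∀ x : β, ∃ a : ℕ, (τ ^ a) x ∉ S)
    (h : ∀ x y : {x : β // x ∉ S}, ∃ t : ℕ, (fr τ S ^ t) x = y) :
    ∀ x y : β, ∃ j : ℕ, (τ ^ j) x = y := by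
  intro x y
  obtain ⟨a, ha⟩ := hmeet x
  obtain ⟨b, hb⟩ := hmeet y
  set c := orderOf τ * b - b with hc
  have hyc : (τ ^ c) ((τ ^ b) y) = y := by
    rw [← Perm.mul_apply, ← pow_add,
      show c + b = orderOf τ * b by
        have h1 := orderOf_pos τ
        have : b ≤ orderOf τ * b := Nat.le_mul_of_pos_left b (orderOf_pos τ)
        omega,
      pow_mul, pow_orderOf_eq_one, one_pow, Perm.one_apply]
  obtain ⟨t, ht⟩ := h ⟨(τ ^ a) x, ha⟩ ⟨(τ ^ b) y, hb⟩
  obtain ⟨j, hj⟩ := fr_pow_coe τ S ⟨(τ ^ a) x, ha⟩ t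
  have hkey : (τ ^ j) ((τ ^ a) x) = (τ ^ b) y := by
    rw [← hj, ht]
  refine ⟨c + j + a, ?_⟩
  rw [pow_add, pow_add, Perm.mul_apply, Perm.mul_apply, hkey, hyc]

end FirstReturn
section Fix

variable {β : Type*} [DecidableEq β] [Fintype β] (S : Finset β)

lemma fix_inv (α : Equiv.Perm β) (hfix : ∀ s ∈ S, α s = s) :
    ∀ s ∈ S, α⁻¹ s = s := by
  intro s hs
  have := congrArg (fun y => α⁻¹ y) (hfix s hs)
  simpa using this.symm

lemma fix_inv_mem (α : Equiv.Perm β) (hfix : ∀ s ∈ S, α s = s) (y : β) :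
    α⁻¹ y ∈ S ↔ y ∈ S := by
  constructor
  · intro h
    have : y = α (α⁻¹ y) := (Equiv.apply_symm_apply α y).symm
    rw [this, hfix _ h]; exact h
  · intro h; rw [fix_inv S α hfix y h]; exact h

lemma fix_inv_pred (α : Equiv.Perm β) (hfix : ∀ s ∈ S, α s = s) :
    ∀ x : β, α x ∉ S ↔ x ∉ S := by
  intro x
  rw [Iff.comm]
  constructor
  · intro hx hax
    have h := (fix_inv_mem S α hfix (α x)).mpr hax
    rw [show α⁻¹ (α x) = x from α.symm_apply_apply x] at h
    exact hx h
  · intro hax hx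
    rw [hfix x hx] at hax; exact hax hx

lemma iterSub (σ α : Equiv.Perm β) (hfix : ∀ s ∈ S, α s = s) (x : β) (j : ℕ)
    (hmid : ∀ i, 1 ≤ i → i ≤ j → (σ ^ i) x ∈ S) :
    ∀ m, 1 ≤ m → m ≤ j + 1 → ((α⁻¹ * σ) ^ m) x = α⁻¹ ((σ ^ m) x) := by
  intro m
  induction m with
  | zero => omega
  | succ m IH =>
    intro _ hm1
    rcases Nat.eq_zero_or_pos m with rfl | hm0
    · simp [Perm.mul_apply]
    · have hIH := IH (by omega) (by omega)
      rw [pow_succ', Perm.mul_apply, hIH, Perm.mul_apply,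
        fix_inv S α hfix _ (hmid m hm0 (by omega)),
        ← Perm.mul_apply σ (σ ^ m), ← pow_succ']

lemma fr_mul_eq (σ α : Equiv.Perm β) (hfix : ∀ s ∈ S, α s = s)
    (hinv : ∀ x : β, α x ∉ S ↔ x ∉ S) :
    fr (α⁻¹ * σ) S = (α.subtypePerm hinv)⁻¹ * fr σ S := by
  apply Equiv.ext
  intro x
  apply Subtype.ext
  set dσ := Nat.find (frAux σ S x) with hdσ
  have hmid : ∀ i, 1 ≤ i → i ≤ dσ → (σ ^ i) (x : β) ∈ S := by
    intro i h1 h2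
    have hmin := Nat.find_min (frAux σ S x) (show i - 1 < dσ by omega)
    rw [show i - 1 + 1 = i by omega, not_not] at hmin
    exact hmin
  have hτfind : Nat.find (frAux (α⁻¹ * σ) S x) = dσ := by
    rw [Nat.find_eq_iff]
    constructor
    · rw [iterSub S σ α hfix (x : β) dσ hmid (dσ + 1) (by omega) (le_refl _)]
      intro hc
      exact Nat.find_spec (frAux σ S x) ((fix_inv_mem S α hfix _).mp hc)
    · intro t ht
      rw [not_not, iterSub S σ α hfix (x : β) dσ hmid (t + 1) (by omega) (by omega)]
      have hmem : (σ ^ (t + 1)) (x : β) ∈ S := by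
        have hmin := Nat.find_min (frAux σ S x) ht
        rwa [not_not] at hmin
      exact (fix_inv_mem S α hfix _).mpr hmem
  show ((α⁻¹ * σ) ^ (Nat.find (frAux (α⁻¹ * σ) S x) + 1)) (x : β) = _
  rw [hτfind, iterSub S σ α hfix (x : β) dσ hmid (dσ + 1) (by omega) (le_refl _)]
  rfl

lemma orbit_meets (σ α : Equiv.Perm β) (hσ : IsCircular σ)
    (hfix : ∀ s ∈ S, α s = s) (hu : ∃ u : β, u ∉ S) (x : β) :
    ∃ a : ℕ, ((α⁻¹ * σ) ^ a) x ∉ S := by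
  by_contra hc
  push_neg at hc
  have key : ∀ a : ℕ, ((α⁻¹ * σ) ^ a) x = (σ ^ a) x ∧ (σ ^ a) x ∈ S := by
    intro a
    induction a with
    | zero => exact ⟨rfl, by simpa using hc 0⟩
    | succ a IH =>
      have h1 : ((α⁻¹ * σ) ^ (a + 1)) x = α⁻¹ ((σ ^ (a + 1)) x) := by
        rw [pow_succ', Perm.mul_apply, IH.1, Perm.mul_apply,
          ← Perm.mul_apply σ (σ ^ a), ← pow_succ']
      have h2 : (σ ^ (a + 1)) x ∈ S := by
        have hin := hc (a + 1)
        rw [h1] at hin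
        exact (fix_inv_mem S α hfix _).mp hin
      exact ⟨by rw [h1, fix_inv S α hfix _ h2], h2⟩
  obtain ⟨u, hu⟩ := hu
  obtain ⟨a, ha⟩ := trans_of_isCircular hσ x u
  exact hu (ha ▸ (key a).2)

lemma numCycles_ofSubtype' {p : β → Prop} [DecidablePred p] (u : Equiv.Perm (Subtype p)) :
    numCycles (Equiv.Perm.ofSubtype u) = numCycles u + (Fintype.card β - Fintype.card (Subtype p)) := by
  unfold numCycles
  rw [Equiv.Perm.cycleType_ofSubtype, Equiv.Perm.support_ofSubtype, Finset.card_map]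
  have h1 : u.support.card ≤ Fintype.card (Subtype p) := by
    simpa using Finset.card_le_univ u.support
  have h2 : Fintype.card (Subtype p) ≤ Fintype.card β := Fintype.card_subtype_le p
  omega

end Fix
section CountS

lemma count_S (n k : ℕ) (hn : 2 ≤ n) (hk1 : 1 ≤ k) (hk2 : 2 * k ≤ n)
    (S : Finset (Fin n)) (hS : S.card < k) :
    Nat.card {α : Equiv.Perm (Fin n) //
      (numCycles α = k ∧ IsCircular (α⁻¹ * finRotate n)) ∧ ∀ x ∈ S, α x = x}
      = H (n - S.card) (k - S.card) := by
  have hSn : S.card ≤ n := by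
    have := Finset.card_le_univ S
    rwa [Fintype.card_fin] at this
  have hcard_sub : Fintype.card {x : Fin n // x ∉ S} = n - S.card := by
    rw [Fintype.card_subtype_compl, Fintype.card_coe, Fintype.card_fin]
  have h2s : 2 ≤ Fintype.card {x : Fin n // x ∉ S} := by rw [hcard_sub]; omega
  have hu : ∃ u : Fin n, u ∉ S := by
    by_contra hc
    push_neg at hc
    have hsub : (Finset.univ : Finset (Fin n)) ⊆ S := fun x _ => hc x
    have := Finset.card_le_card hsub
    rw [Finset.card_univ, Fintype.card_fin] at this
    omega
  have hσ : IsCircular (finRotate n) :=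
    ⟨isCycle_finRotate_of_le hn, support_finRotate_of_le hn⟩
  have hσ' : IsCircular (fr (finRotate n) S) :=
    isCircular_of_trans h2s (fr_trans S (trans_of_isCircular hσ))
  have key : ∀ (α : Equiv.Perm (Fin n)) (hfix : ∀ x ∈ S, α x = x),
      ((numCycles α = k ∧ IsCircular (α⁻¹ * finRotate n)) ↔
        (numCycles (α.subtypePerm (p := fun x => x ∉ S) (fix_inv_pred S α hfix)) = k - S.card ∧
         IsCircular ((α.subtypePerm (p := fun x => x ∉ S) (fix_inv_pred S α hfix))⁻¹ * fr (finRotate n) S))) := by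
    intro α hfix
    have hre : Equiv.Perm.ofSubtype (α.subtypePerm (p := fun x => x ∉ S) (fix_inv_pred S α hfix)) = α :=
      Equiv.Perm.ofSubtype_subtypePerm _ (fun x hx hxS => hx (hfix x hxS))
    have hnc := numCycles_ofSubtype' (p := fun x => x ∉ S)
      (α.subtypePerm (fix_inv_pred S α hfix))
    rw [hre, hcard_sub, Fintype.card_fin] at hnc
    constructor
    · rintro ⟨hnum, hcirc⟩
      refine ⟨by omega, ?_⟩
      rw [← fr_mul_eq S (finRotate n) α hfix (fix_inv_pred S α hfix)]
      exact isCircular_of_trans h2s (fr_trans S (trans_of_isCircular hcirc))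
    · rintro ⟨hnum, hcirc⟩
      refine ⟨by omega, ?_⟩
      rw [← fr_mul_eq S (finRotate n) α hfix (fix_inv_pred S α hfix)] at hcirc
      exact isCircular_of_trans (by rw [Fintype.card_fin]; omega)
        (trans_of_fr S (orbit_meets S (finRotate n) α hσ hfix hu)
          (trans_of_isCircular hcirc))
  rw [← card_eq_H (fr (finRotate n) S) hσ' hcard_sub (by omega) (k - S.card)]
  apply Nat.card_congr
  refine Equiv.ofBijective
    (fun a => ⟨a.1.subtypePerm (fix_inv_pred S a.1 a.2.2), (key a.1 a.2.2).mp a.2.1⟩)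
    ⟨?_, ?_⟩
  · rintro ⟨α, hα⟩ ⟨α', hα'⟩ h
    have hval := congrArg Subtype.val h
    simp only at hval
    apply Subtype.ext
    show α = α'
    apply Equiv.ext
    intro x
    by_cases hx : x ∈ S
    · rw [hα.2 x hx, hα'.2 x hx]
    · have h1 := congrArg
        (fun u : Equiv.Perm {x : Fin n // x ∉ S} => (u ⟨x, hx⟩ : {x : Fin n // x ∉ S})) hval
      have h2 := congrArg Subtype.val h1
      simpa using h2
  · rintro ⟨α', hb⟩
    have hfixb : ∀ x ∈ S, Equiv.Perm.ofSubtype α' x = x := fun x hx =>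
      Equiv.Perm.ofSubtype_apply_of_not_mem α' (not_not_intro hx)
    have hsp : (Equiv.Perm.ofSubtype α').subtypePerm
        (fix_inv_pred S _ hfixb) = α' :=
      Equiv.ext fun x => Subtype.ext (Equiv.Perm.ofSubtype_apply_coe α' x)
    refine ⟨⟨Equiv.Perm.ofSubtype α', (key _ hfixb).mpr ?_, hfixb⟩, ?_⟩
    · rw [hsp]; exact hb
    · exact Subtype.ext hsp

end CountS
theorem r_eq_alternating_sum (n k : ℕ) (hn : 2 ≤ n) (hk1 : 1 ≤ k)
    (hk2 : 2 * k ≤ n) :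
    (r n k : ℤ) = ∑ i ∈ Finset.range k,
      (-1 : ℤ) ^ i * (n.choose i : ℤ) * (H (n - i) (k - i) : ℤ) := by
  classical
  set P : Equiv.Perm (Fin n) → Prop :=
    fun α => numCycles α = k ∧ IsCircular (α⁻¹ * finRotate n) with hPdef
  set F : Finset (Equiv.Perm (Fin n)) := Finset.univ.filter P with hF
  have hr : r n k = (F.filter fun α => ∀ x, α x ≠ x).card := by
    unfold r
    rw [Nat.card_eq_fintype_card, Fintype.card_subtype]
    congr 1
    rw [hF, Finset.filter_filter]
    ext α
    simp only [Finset.mem_filter, Finset.mem_univ, true_and, hPdef]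
    tauto
  have hg : ∀ S : Finset (Fin n), S.card < k →
      ((F.filter fun α => ∀ x ∈ S, α x = x).card : ℤ)
        = ((H (n - S.card) (k - S.card) : ℕ) : ℤ) := by
    intro S hSk
    rw [← count_S n k hn hk1 hk2 S hSk]
    congr 1
    rw [Nat.card_eq_fintype_card, Fintype.card_subtype]
    congr 1
    rw [hF, Finset.filter_filter]
  have hg0 : ∀ S : Finset (Fin n), k ≤ S.card →
      (F.filter fun α => ∀ x ∈ S, α x = x) = ∅ := by
    intro S hSk
    rw [Finset.filter_eq_empty_iff]
    intro α hα hfix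
    have hP : P α := (Finset.mem_filter.mp hα).2
    have hsupp : α.support ⊆ Finset.univ \ S := by
      intro x hx
      rw [Finset.mem_sdiff]
      exact ⟨Finset.mem_univ x, fun hxS => (Equiv.Perm.mem_support.mp hx) (hfix x hxS)⟩
    have h1 : α.support.card ≤ n - S.card := by
      have := Finset.card_le_card hsupp
      rwa [Finset.card_sdiff_of_subset (Finset.subset_univ S), Finset.card_univ,
        Fintype.card_fin] at this
    have hSn : S.card ≤ n := by
      have := Finset.card_le_univ S
      rwa [Fintype.card_fin] at this
    have h2 := hP.1
    unfold numCycles at h2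
    rw [Fintype.card_fin] at h2
    have hcT : Multiset.card α.cycleType = 0 := by omega
    have hα1 : α = 1 := Equiv.Perm.card_cycleType_eq_zero.mp hcT
    rw [hα1] at h2
    simp only [Equiv.Perm.cycleType_one, Equiv.Perm.support_one, Multiset.card_zero,
      Finset.card_empty, Nat.sub_zero] at h2
    omega
  have hmain : ((F.filter fun α => ∀ x, α x ≠ x).card : ℤ) =
      ∑ S ∈ (Finset.univ : Finset (Fin n)).powerset,
        (-1 : ℤ) ^ S.card * ((F.filter fun α => ∀ x ∈ S, α x = x).card : ℤ) := by
    have hswap : ∀ S : Finset (Fin n),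
        ((F.filter fun α => ∀ x ∈ S, α x = x).card : ℤ) =
        ∑ α ∈ F, (if ∀ x ∈ S, α x = x then (1 : ℤ) else 0) := by
      intro S
      rw [Finset.card_filter, Nat.cast_sum]
      exact Finset.sum_congr rfl fun α _ => by split <;> simp
    have h1 : ∑ S ∈ (Finset.univ : Finset (Fin n)).powerset,
        (-1 : ℤ) ^ S.card * ((F.filter fun α => ∀ x ∈ S, α x = x).card : ℤ)
        = ∑ α ∈ F, ∑ S ∈ (Finset.univ : Finset (Fin n)).powerset,
            (-1 : ℤ) ^ S.card * (if ∀ x ∈ S, α x = x then (1 : ℤ) else 0) := by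
      rw [← Finset.sum_comm]
      exact Finset.sum_congr rfl fun S _ => by rw [hswap, Finset.mul_sum]
    have h2 : ∀ α : Equiv.Perm (Fin n),
        ∑ S ∈ (Finset.univ : Finset (Fin n)).powerset,
          (-1 : ℤ) ^ S.card * (if ∀ x ∈ S, α x = x then (1 : ℤ) else 0)
        = if ∀ x, α x ≠ x then 1 else 0 := by
      intro α
      set T : Finset (Fin n) := Finset.univ.filter (fun x => α x = x) with hT
      have hsub : T.powerset ⊆ (Finset.univ : Finset (Fin n)).powerset :=
        Finset.powerset_mono.mpr (Finset.subset_univ T)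
      have hvanish : ∀ S ∈ (Finset.univ : Finset (Fin n)).powerset, S ∉ T.powerset →
          (-1 : ℤ) ^ S.card * (if ∀ x ∈ S, α x = x then (1 : ℤ) else 0) = 0 := by
        intro S _ hS
        rw [Finset.mem_powerset] at hS
        have hnall : ¬ ∀ x ∈ S, α x = x := by
          intro hall
          exact hS fun x hx =>
            Finset.mem_filter.mpr ⟨Finset.mem_univ x, hall x hx⟩
        rw [if_neg hnall, mul_zero]
      rw [← Finset.sum_subset hsub hvanish]
      have hones : ∀ S ∈ T.powerset,
          (-1 : ℤ) ^ S.card * (if ∀ x ∈ S, α x = x then (1 : ℤ) else 0)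
            = (-1 : ℤ) ^ S.card := by
        intro S hS
        rw [Finset.mem_powerset] at hS
        rw [if_pos fun x hx => (Finset.mem_filter.mp (hS hx)).2, mul_one]
      rw [Finset.sum_congr rfl hones, Finset.sum_powerset_neg_one_pow_card]
      by_cases hd : ∀ x, α x ≠ x
      · rw [if_pos hd, if_pos]
        rw [hT, Finset.filter_eq_empty_iff]
        exact fun x _ => hd x
      · rw [if_neg hd, if_neg]
        intro hemp
        apply hd
        intro x hfx
        have hxT : x ∈ T := Finset.mem_filter.mpr ⟨Finset.mem_univ x, hfx⟩
        rw [hemp] at hxT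
        exact absurd hxT (Finset.notMem_empty x)
    have h3 : ((F.filter fun α => ∀ x, α x ≠ x).card : ℤ)
        = ∑ α ∈ F, (if ∀ x, α x ≠ x then (1 : ℤ) else 0) := by
      rw [Finset.card_filter, Nat.cast_sum]
      exact Finset.sum_congr rfl fun α _ => by split <;> simp
    rw [h3, h1]
    exact Finset.sum_congr rfl fun α _ => (h2 α).symm
  rw [hr, hmain, Finset.sum_powerset, Finset.card_univ, Fintype.card_fin]
  have hzero : ∀ j ∈ Finset.range (n + 1), j ∉ Finset.range k →
      (∑ S ∈ Finset.powersetCard j (Finset.univ : Finset (Fin n)),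
        (-1 : ℤ) ^ S.card * ((F.filter fun α => ∀ x ∈ S, α x = x).card : ℤ)) = 0 := by
    intro j _ hjk
    apply Finset.sum_eq_zero
    intro S hS
    obtain ⟨_, hScard⟩ := Finset.mem_powersetCard.mp hS
    have hk_le : k ≤ S.card := by
      rw [hScard]
      exact le_of_not_gt (Finset.mem_range.not.mp hjk ∘ id)
    rw [hg0 S hk_le]
    simp
  rw [← Finset.sum_subset (Finset.range_subset_range.mpr (by omega : k ≤ n + 1)) hzero]
  apply Finset.sum_congr rfl
  intro j hj
  have hjk : j < k := Finset.mem_range.mp hj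
  have hval : ∀ S ∈ Finset.powersetCard j (Finset.univ : Finset (Fin n)),
      (-1 : ℤ) ^ S.card * ((F.filter fun α => ∀ x ∈ S, α x = x).card : ℤ)
      = (-1 : ℤ) ^ j * ((H (n - j) (k - j) : ℕ) : ℤ) := by
    intro S hS
    obtain ⟨_, hScard⟩ := Finset.mem_powersetCard.mp hS
    rw [hg S (by rw [hScard]; exact hjk), hScard]
  rw [Finset.sum_congr rfl hval, Finset.sum_const, Finset.card_powersetCard,
    Finset.card_univ, Fintype.card_fin, nsmul_eq_mul]
  push_cast
  ring
end

section
/- Fix a subset J = {j_1,...,j_i} of {1,...,n} with i ≤ k−1 ≤ n/2 − 1. There is a bijection between the set of permutations α of {1,...,n} with exactly k cycles, with α⁻¹·(1,...,n) an n-cycle, and with α⁻¹(1,...,n)(j) = j+1 (mod n) for all j ∈ J, and the set of permutations α' of {1,...,n}\J with exactly k−i cycles such that α'⁻¹σ' is an (n−i)-cycle, where σ' is the cycle obtained from (1,...,n) by deleting the elements of J. -/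
namespace DeletionBij

open Equiv Equiv.Perm Finset
open Fin.NatCast Fin.CommRing

variable {m : ℕ}

section Skip

variable (J : Finset (Fin (m + 1))) (hJ : ∃ y : Fin (m + 1), y ∉ J)
include hJ

lemma escapes (z : Fin (m + 1)) : ∃ t : ℕ, z + (t : Fin (m + 1)) ∉ J := by
  obtain ⟨y, hy⟩ := hJ
  refine ⟨(y - z).val, ?_⟩
  rw [Fin.cast_val_eq_self]
  have : z + (y - z) = y := by ring
  rwa [this]

lemma bescapes (x : Fin (m + 1)) : ∃ r : ℕ, x - ((r + 1 : ℕ) : Fin (m + 1)) ∉ J := by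
  obtain ⟨y, hy⟩ := hJ
  refine ⟨(x - y - 1).val, ?_⟩
  have h1 : (((x - y - 1).val + 1 : ℕ) : Fin (m + 1)) = x - y := by
    push_cast [Fin.cast_val_eq_self]; ring
  rw [h1]
  have : x - (x - y) = y := by ring
  rwa [this]

noncomputable def fwdA (z : Fin (m + 1)) : ℕ := Nat.find (escapes J hJ z)

noncomputable def fwd (z : Fin (m + 1)) : Fin (m + 1) := z + (fwdA J hJ z : Fin (m + 1))

lemma fwd_not_mem (z : Fin (m + 1)) : fwd J hJ z ∉ J := Nat.find_spec (escapes J hJ z)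

lemma fwd_min (z : Fin (m + 1)) {l : ℕ} (h : l < fwdA J hJ z) : z + (l : Fin (m + 1)) ∈ J := by
  have := Nat.find_min (escapes J hJ z) h
  simpa using this

noncomputable def bwdA (x : Fin (m + 1)) : ℕ := Nat.find (bescapes J hJ x)

noncomputable def bwd (x : Fin (m + 1)) : Fin (m + 1) := x - (bwdA J hJ x : Fin (m + 1))

lemma bwd_spec (x : Fin (m + 1)) : x - ((bwdA J hJ x + 1 : ℕ) : Fin (m + 1)) ∉ J :=
  Nat.find_spec (bescapes J hJ x)

lemma bwd_min (x : Fin (m + 1)) {i : ℕ} (h : i < bwdA J hJ x) :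
    x - ((i + 1 : ℕ) : Fin (m + 1)) ∈ J := by
  have := Nat.find_min (bescapes J hJ x) h
  simpa using this

/-- `S = σ(J)`, the image of `J` under `x ↦ x + 1`. -/
def S : Finset (Fin (m + 1)) := J.image (· + 1)

omit hJ in
lemma mem_S {z : Fin (m + 1)} : z ∈ S J ↔ z - 1 ∈ J := by
  simp only [S, mem_image]
  constructor
  · rintro ⟨j, hj, rfl⟩
    simpa using hj
  · intro h
    exact ⟨z - 1, h, by ring⟩

omit hJ in
lemma card_S : (S J).card = J.card :=
  Finset.card_image_of_injective _ (add_left_injective 1)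

/-- The bijection between the complement of `J` and the complement of `S J`:
forward direction walks backwards along `σ` through `J`. -/
noncomputable def iota : {x : Fin (m + 1) // x ∉ J} ≃ {x : Fin (m + 1) // x ∉ S J} where
  toFun x := ⟨bwd J hJ x.val, by
    rw [mem_S]
    have h := bwd_spec J hJ x.val
    have e : bwd J hJ x.val - 1 = x.val - ((bwdA J hJ x.val + 1 : ℕ) : Fin (m + 1)) := by
      unfold bwd; push_cast; ring
    rwa [e]⟩
  invFun z := ⟨fwd J hJ z.val, fwd_not_mem J hJ z.val⟩
  left_inv := by
    rintro ⟨x, hx⟩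
    ext
    set r := bwdA J hJ x with hr
    have hfind : fwdA J hJ (bwd J hJ x) = r := by
      refine (Nat.find_eq_iff _).mpr ⟨?_, ?_⟩
      · have e : bwd J hJ x + (r : Fin (m + 1)) = x := by rw [bwd, ← hr]; ring
        rwa [e]
      · intro l hl hcon
        apply hcon
        have e : bwd J hJ x + (l : Fin (m + 1)) = x - (((r - l - 1) + 1 : ℕ) : Fin (m + 1)) := by
          rw [bwd, ← hr]
          have h1 : ((r - l - 1) + 1 : ℕ) = r - l := by omega
          rw [h1, Nat.cast_sub hl.le]
          ring
        rw [e]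
        exact bwd_min J hJ x (by omega)
    show (fwd J hJ (bwd J hJ x)).val = x.val
    rw [fwd, hfind, bwd, ← hr]
    congr 1
    ring
  right_inv := by
    rintro ⟨z, hz⟩
    ext
    set t := fwdA J hJ z with ht
    have hfind : bwdA J hJ (fwd J hJ z) = t := by
      refine (Nat.find_eq_iff _).mpr ⟨?_, ?_⟩
      · have e : fwd J hJ z - ((t + 1 : ℕ) : Fin (m + 1)) = z - 1 := by
          rw [fwd, ← ht]; push_cast; ring
        rw [e]
        rwa [← mem_S]
      · intro i hi hcon
        apply hcon
        have e : fwd J hJ z - ((i + 1 : ℕ) : Fin (m + 1)) = z + ((t - i - 1 : ℕ) : Fin (m + 1)) := by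
          rw [fwd, ← ht]
          rw [Nat.cast_sub (by omega : (1:ℕ) ≤ t - i), Nat.cast_sub (by omega : i ≤ t)]
          push_cast
          ring
        rw [e]
        exact fwd_min J hJ z (by omega)
    show (bwd J hJ (fwd J hJ z)).val = z.val
    rw [bwd, hfind, fwd, ← ht]
    congr 1
    ring

lemma iota_apply_val (x : {x : Fin (m + 1) // x ∉ J}) :
    ((iota J hJ x : {x : Fin (m + 1) // x ∉ S J}) : Fin (m + 1)) = bwd J hJ x.val := rfl

lemma iota_symm_apply_val (z : {x : Fin (m + 1) // x ∉ S J}) :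
    (((iota J hJ).symm z : {x : Fin (m + 1) // x ∉ J}) : Fin (m + 1)) = fwd J hJ z.val := rfl

end Skip

section Maps

variable (J : Finset (Fin (m + 1))) (hJ : ∃ y : Fin (m + 1), y ∉ J)

omit hJ in
lemma hmem_of_hfix {α : Perm (Fin (m + 1))} (hfix : ∀ s ∈ S J, α s = s) :
    ∀ x, x ∉ S J ↔ α x ∉ S J := by
  intro x
  constructor
  · intro hx hax
    have h1 : α (α x) = α x := hfix _ hax
    have h2 : α x = x := α.injective h1
    rw [h2] at hax
    exact hx hax
  · intro hax hx
    rw [hfix x hx] at hax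
    exact hax hx

/-- Extend a permutation of the complement of `J` to `Fin (m+1)` via `iota`,
acting as the identity on `S J`. -/
noncomputable def Gmap (α' : Perm {x : Fin (m + 1) // x ∉ J}) : Perm (Fin (m + 1)) :=
  α'.extendDomain (iota J hJ)

lemma Gmap_fix (α' : Perm {x : Fin (m + 1) // x ∉ J}) {s : Fin (m + 1)} (hs : s ∈ S J) :
    Gmap J hJ α' s = s :=
  Perm.extendDomain_apply_not_subtype _ _ (by simpa using hs)

lemma Gmap_apply_iota (α' : Perm {x : Fin (m + 1) // x ∉ J}) (x : {x : Fin (m + 1) // x ∉ J}) :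
    Gmap J hJ α' ((iota J hJ x : {x : Fin (m + 1) // x ∉ S J}) : Fin (m + 1)) =
      ((iota J hJ (α' x) : {x : Fin (m + 1) // x ∉ S J}) : Fin (m + 1)) :=
  Perm.extendDomain_apply_image _ _ _

lemma Gmap_fixes_S (α' : Perm {x : Fin (m + 1) // x ∉ J}) :
    ∀ s ∈ S J, Gmap J hJ α' s = s := fun _ hs => Gmap_fix J hJ α' hs

/-- Restrict a permutation of `Fin (m+1)` fixing `S J` to the complement of `J`. -/
noncomputable def Fmap (α : Perm (Fin (m + 1))) (hα : ∀ x, x ∉ S J ↔ α x ∉ S J) :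
    Perm {x : Fin (m + 1) // x ∉ J} :=
  ((iota J hJ).trans (α.subtypePerm (fun x => (hα x).symm))).trans (iota J hJ).symm

lemma Fmap_apply (α : Perm (Fin (m + 1))) (hα : ∀ x, x ∉ S J ↔ α x ∉ S J)
    (x : {x : Fin (m + 1) // x ∉ J}) :
    Fmap J hJ α hα x = (iota J hJ).symm ⟨α ((iota J hJ x : _) : Fin (m + 1)),
      (hα _).mp (iota J hJ x).2⟩ := rfl

lemma Gmap_Fmap (α : Perm (Fin (m + 1))) (hα : ∀ x, x ∉ S J ↔ α x ∉ S J)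
    (hfix : ∀ s ∈ S J, α s = s) : Gmap J hJ (Fmap J hJ α hα) = α := by
  ext x
  by_cases hx : x ∈ S J
  · rw [Gmap_fix J hJ _ hx, hfix x hx]
  · have hxe : x = ((iota J hJ ((iota J hJ).symm ⟨x, hx⟩) : _) : Fin (m + 1)) := by simp
    conv_lhs => rw [hxe]
    rw [Gmap_apply_iota]
    rw [Fmap_apply]
    simp [Perm.subtypePerm_apply]
lemma Fmap_Gmap (α' : Perm {x : Fin (m + 1) // x ∉ J})
    (hα : ∀ x, x ∉ S J ↔ Gmap J hJ α' x ∉ S J) :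
    Fmap J hJ (Gmap J hJ α') hα = α' := by
  ext z : 1
  rw [Fmap_apply, Equiv.symm_apply_eq]
  exact Subtype.ext (Gmap_apply_iota J hJ α' z)

lemma numCycles_Gmap (α' : Perm {x : Fin (m + 1) // x ∉ J}) :
    numCycles (Gmap J hJ α') = numCycles α' + J.card := by
  have hcard : Fintype.card {x : Fin (m + 1) // x ∉ J} = (m + 1) - J.card := by
    rw [Fintype.card_subtype_compl]
    simp
  have hsupp : α'.support.card ≤ Fintype.card {x : Fin (m + 1) // x ∉ J} :=
    le_trans (Finset.card_le_card (Finset.subset_univ _)) (le_of_eq (Finset.card_univ))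
  have hJcard : J.card ≤ m + 1 := by
    have := Finset.card_le_card (Finset.subset_univ J)
    simpa using this
  rw [hcard] at hsupp
  unfold numCycles Gmap
  rw [Equiv.Perm.cycleType_extendDomain, Equiv.Perm.card_support_extend_domain]
  rw [hcard, Fintype.card_fin]
  omega

end Maps

lemma isCircular_iff {β : Type*} [DecidableEq β] [Fintype β] [Nonempty β] (τ : Equiv.Perm β) :
    IsCircular τ ↔ (∀ x, τ x ≠ x) ∧ ∀ x y, τ.SameCycle x y := by
  constructor
  · rintro ⟨hc, hs⟩
    have hmove : ∀ x, τ x ≠ x := fun x =>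
      Equiv.Perm.mem_support.mp (by rw [hs]; exact Finset.mem_univ x)
    refine ⟨hmove, fun x y => ?_⟩
    obtain ⟨a, -, ha⟩ := hc
    exact (ha (hmove x)).symm.trans (ha (hmove y))
  · rintro ⟨h1, h2⟩
    obtain ⟨x⟩ := ‹Nonempty β›
    exact ⟨⟨x, h1 x, fun y _ => h2 x y⟩,
      Finset.eq_univ_iff_forall.mpr fun y => Equiv.Perm.mem_support.mpr (h1 y)⟩

section Dyn

variable (J : Finset (Fin (m + 1))) (hJ : ∃ y : Fin (m + 1), y ∉ J)
include hJ

omit hJ in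
lemma iter_chain (π : Perm (Fin (m + 1))) (hstep : ∀ w ∈ J, π w = w + 1) (z : Fin (m + 1))
    (t : ℕ) (hmem : ∀ l : ℕ, l < t → z + (l : Fin (m + 1)) ∈ J) :
    ∀ l, l ≤ t → π^[l] z = z + (l : Fin (m + 1)) := by
  intro l
  induction l with
  | zero => intro _; simp
  | succ l ih =>
    intro hl
    have hlt : l < t := by omega
    rw [Function.iterate_succ_apply', ih (by omega), hstep _ (hmem l hlt)]
    push_cast
    ring

omit hJ in
lemma iterate_finRotate (l : ℕ) (z : Fin (m + 1)) :
    (⇑(finRotate (m + 1)))^[l] z = z + (l : Fin (m + 1)) := by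
  induction l with
  | zero => simp
  | succ l ih =>
    rw [Function.iterate_succ_apply', ih, finRotate_succ_apply]
    push_cast
    ring

omit hJ in
lemma D1 (π : Perm (Fin (m + 1))) (π' : Perm {x : Fin (m + 1) // x ∉ J})
    (hchar : ∀ x : {x : Fin (m + 1) // x ∉ J}, ∃ t : ℕ,
      ((π' x : {x : Fin (m + 1) // x ∉ J}) : Fin (m + 1)) = π^[t + 1] x.val ∧
      ∀ l, 1 ≤ l → l < t + 1 → π^[l] x.val ∈ J)
    (hsize : ∃ a b : {x : Fin (m + 1) // x ∉ J}, a ≠ b)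
    (hcirc : IsCircular π) : IsCircular π' := by
  obtain ⟨a, b, hab⟩ := hsize
  haveI : Nonempty {x : Fin (m + 1) // x ∉ J} := ⟨a⟩
  rw [isCircular_iff] at hcirc ⊢
  obtain ⟨hmov, hsc⟩ := hcirc
  have key : ∀ d : ℕ, ∀ x y : {x : Fin (m + 1) // x ∉ J},
      π^[d] x.val = y.val → ∃ t : ℕ, π'^[t] x = y := by
    intro d
    induction d using Nat.strong_induction_on with
    | _ d ih =>
      intro x y hxy
      rcases Nat.eq_zero_or_pos d with rfl | hd
      · exact ⟨0, Subtype.ext (by simpa using hxy)⟩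
      · obtain ⟨t, hv, hmemJ⟩ := hchar x
        by_cases hdm : d < t + 1
        · exact absurd (hxy ▸ hmemJ d hd hdm) y.2
        · push_neg at hdm
          have h2 : π^[d - (t + 1)] (π' x).val = y.val := by
            rw [hv, ← Function.iterate_add_apply,
              (by omega : d - (t + 1) + (t + 1) = d), hxy]
          obtain ⟨t', ht'⟩ := ih (d - (t + 1)) (by omega) (π' x) y h2
          exact ⟨t' + 1, by rw [Function.iterate_succ_apply]; exact ht'⟩
  constructor
  · intro x heq
    obtain ⟨t, hv, hmemJ⟩ := hchar x
    have hfix : π^[t + 1] x.val = x.val := by rw [← hv, heq]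
    obtain ⟨y, hyx⟩ : ∃ y : {x : Fin (m + 1) // x ∉ J}, y ≠ x := by
      rcases eq_or_ne a x with rfl | h
      · exact ⟨b, fun hbx => hab hbx.symm⟩
      · exact ⟨a, h⟩
    obtain ⟨d, _, hd⟩ := (hsc x.val y.val).exists_pow_eq'
    have hd' : π^[d] x.val = y.val := by simpa [Equiv.Perm.iterate_eq_pow] using hd
    have hmod : π^[d % (t + 1)] x.val = y.val := by
      have hq : π^[(t + 1) * (d / (t + 1))] x.val = x.val := by
        rw [Function.iterate_mul]
        exact Function.iterate_fixed hfix _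
      calc π^[d % (t + 1)] x.val
          = π^[d % (t + 1)] (π^[(t + 1) * (d / (t + 1))] x.val) := by rw [hq]
        _ = π^[d % (t + 1) + (t + 1) * (d / (t + 1))] x.val :=
            (Function.iterate_add_apply _ _ _ _).symm
        _ = π^[d] x.val := by rw [Nat.mod_add_div]
        _ = y.val := hd'
    rcases Nat.eq_zero_or_pos (d % (t + 1)) with h0 | h1
    · rw [h0] at hmod
      exact hyx (Subtype.ext (by simpa using hmod)).symm
    · exact y.2 (hmod ▸ hmemJ _ h1 (Nat.mod_lt _ (Nat.succ_pos t)))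
  · intro x y
    obtain ⟨d, _, hd⟩ := (hsc x.val y.val).exists_pow_eq'
    obtain ⟨t, ht⟩ := key d x y (by simpa [Equiv.Perm.iterate_eq_pow] using hd)
    exact ⟨(t : ℤ), by rw [zpow_natCast]; simpa [Equiv.Perm.iterate_eq_pow] using ht⟩

lemma D2 (hm1 : 1 ≤ m) (π : Perm (Fin (m + 1))) (π' : Perm {x : Fin (m + 1) // x ∉ J})
    (hchar : ∀ x : {x : Fin (m + 1) // x ∉ J}, ∃ t : ℕ,
      ((π' x : {x : Fin (m + 1) // x ∉ J}) : Fin (m + 1)) = π^[t + 1] x.val ∧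
      ∀ l, 1 ≤ l → l < t + 1 → π^[l] x.val ∈ J)
    (hJfix : ∀ w ∈ J, π w = w + 1)
    (hcirc' : IsCircular π') : IsCircular π := by
  obtain ⟨y0, hy0⟩ := id hJ
  haveI : Nonempty {x : Fin (m + 1) // x ∉ J} := ⟨⟨y0, hy0⟩⟩
  rw [isCircular_iff] at hcirc' ⊢
  obtain ⟨hmov', hsc'⟩ := hcirc'
  have hone : (1 : Fin (m + 1)) ≠ 0 := by
    intro h
    have h2 : ((1 : Fin (m + 1)) : ℕ) = 0 := by rw [h]; rfl
    rw [Fin.val_one'] at h2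
    rw [Nat.mod_eq_of_lt (by omega)] at h2
    exact one_ne_zero h2
  have hreach : ∀ x : Fin (m + 1), ∃ u : ℕ, π^[u] x ∉ J := by
    intro x
    refine ⟨fwdA J hJ x, ?_⟩
    rw [iter_chain J π hJfix x (fwdA J hJ x) (fun l hl => fwd_min J hJ x hl) _ le_rfl]
    exact fwd_not_mem J hJ x
  have keyI : ∀ (t : ℕ) (x : {x : Fin (m + 1) // x ∉ J}),
      ∃ M : ℕ, (π'^[t] x).val = π^[M] x.val := by
    intro t
    induction t with
    | zero => exact fun x => ⟨0, rfl⟩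
    | succ t ih =>
      intro x
      obtain ⟨u, hu, -⟩ := hchar x
      obtain ⟨M, hM⟩ := ih (π' x)
      refine ⟨M + (u + 1), ?_⟩
      rw [Function.iterate_succ_apply, hM, hu, ← Function.iterate_add_apply]
  constructor
  · intro x heq
    by_cases hx : x ∈ J
    · rw [hJfix x hx] at heq
      exact hone (by rwa [add_eq_left] at heq)
    · obtain ⟨t, hv, -⟩ := hchar ⟨x, hx⟩
      have : (π' ⟨x, hx⟩).val = x := by
        rw [hv]
        exact Function.iterate_fixed heq (t + 1)
      exact hmov' ⟨x, hx⟩ (Subtype.ext this)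
  · intro x y
    obtain ⟨u, hu⟩ := hreach x
    obtain ⟨v, hv⟩ := hreach y
    obtain ⟨d, -, hd⟩ := (hsc' ⟨_, hu⟩ ⟨_, hv⟩).exists_pow_eq'
    obtain ⟨M, hM⟩ := keyI d ⟨_, hu⟩
    have hMd : π^[M] (π^[u] x) = π^[v] y := by
      rw [← hM]
      have h5 : π'^[d] (⟨_, hu⟩ : {x : Fin (m + 1) // x ∉ J}) = ⟨_, hv⟩ := by simpa [Equiv.Perm.iterate_eq_pow] using hd
      rw [h5]
    have h1 : π.SameCycle x (π^[u] x) := ⟨(u : ℤ), by rw [zpow_natCast]; simp [Equiv.Perm.iterate_eq_pow]⟩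
    have h2 : π.SameCycle y (π^[v] y) := ⟨(v : ℤ), by rw [zpow_natCast]; simp [Equiv.Perm.iterate_eq_pow]⟩
    have h3 : π.SameCycle (π^[u] x) (π^[v] y) := ⟨(M : ℤ), by rw [zpow_natCast]; simpa [Equiv.Perm.iterate_eq_pow] using hMd⟩
    exact (h1.trans h3).trans h2.symm

lemma char_main (σ' : Perm {x : Fin (m + 1) // x ∉ J})
    (hσ' : ∀ x : {x : Fin (m + 1) // x ∉ J}, ∃ mm : ℕ, 1 ≤ mm ∧
      ((σ' x : {x : Fin (m + 1) // x ∉ J}) : Fin (m + 1)) = (⇑(finRotate (m + 1)))^[mm] x.val ∧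
      ∀ l, 1 ≤ l → l < mm → (⇑(finRotate (m + 1)))^[l] x.val ∈ J)
    (α : Perm (Fin (m + 1))) (hfix : ∀ s ∈ S J, α s = s)
    (hα : ∀ x, x ∉ S J ↔ α x ∉ S J) :
    ∀ x : {x : Fin (m + 1) // x ∉ J}, ∃ t : ℕ,
      ((((Fmap J hJ α hα)⁻¹ * σ') x : {x : Fin (m + 1) // x ∉ J}) : Fin (m + 1)) =
        (α⁻¹ * finRotate (m + 1))^[t + 1] x.val ∧
      ∀ l, 1 ≤ l → l < t + 1 → (α⁻¹ * finRotate (m + 1))^[l] x.val ∈ J := by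
  intro x
  set π := α⁻¹ * finRotate (m + 1) with hπdef
  have hπJ : ∀ w ∈ J, π w = w + 1 := by
    intro w hw
    have hwS : w + 1 ∈ S J := by rw [mem_S]; simpa using hw
    have hfw : α (w + 1) = w + 1 := hfix _ hwS
    show α⁻¹ (finRotate (m + 1) w) = w + 1
    rw [finRotate_succ_apply]
    conv_lhs => rw [← hfw]
    exact α.symm_apply_apply _
  have hπx : π x.val = α⁻¹ (x.val + 1) := by
    show α⁻¹ (finRotate (m + 1) x.val) = _
    rw [finRotate_succ_apply]
  obtain ⟨mm, hmm1, hval, hmid⟩ := hσ' x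
  rw [iterate_finRotate] at hval
  have hmid' : ∀ l : ℕ, 1 ≤ l → l < mm → x.val + (l : Fin (m + 1)) ∈ J := by
    intro l h1 h2
    have := hmid l h1 h2
    rwa [iterate_finRotate] at this
  have hbA : bwdA J hJ (σ' x).val = mm - 1 := by
    refine (Nat.find_eq_iff _).mpr ⟨?_, ?_⟩
    · have e : (σ' x).val - (((mm - 1) + 1 : ℕ) : Fin (m + 1)) = x.val := by
        rw [hval, (by omega : (mm - 1) + 1 = mm)]
        ring
      rw [e]
      exact x.2
    · intro i hi hcon
      apply hcon
      have e : (σ' x).val - ((i + 1 : ℕ) : Fin (m + 1)) =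
          x.val + ((mm - i - 1 : ℕ) : Fin (m + 1)) := by
        rw [hval, Nat.cast_sub (by omega : (1 : ℕ) ≤ mm - i), Nat.cast_sub (by omega : i ≤ mm)]
        push_cast
        ring
      rw [e]
      exact hmid' _ (by omega) (by omega)
  have hiota : ((iota J hJ (σ' x) : {x : Fin (m + 1) // x ∉ S J}) : Fin (m + 1)) = x.val + 1 := by
    rw [iota_apply_val, bwd, hbA, hval, Nat.cast_sub (by omega : (1 : ℕ) ≤ mm)]
    push_cast
    ring
  have happly : ((((Fmap J hJ α hα)⁻¹ * σ') x : {x : Fin (m + 1) // x ∉ J}) : Fin (m + 1)) =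
      fwd J hJ (π x.val) := by
    rw [Perm.mul_apply]
    show (((Fmap J hJ α hα).symm (σ' x) : {x : Fin (m + 1) // x ∉ J}) : Fin (m + 1)) = _
    rw [Fmap]
    simp only [Equiv.symm_trans_apply, Equiv.symm_symm]
    rw [iota_symm_apply_val]
    have h2 : (((α.subtypePerm (fun x => (hα x).symm)).symm (iota J hJ (σ' x))) :
        {x : Fin (m + 1) // x ∉ S J}).val = α⁻¹ ((iota J hJ (σ' x) :
        {x : Fin (m + 1) // x ∉ S J}) : Fin (m + 1)) := rfl
    rw [h2, hiota, hπx]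
  have hch : ∀ l, l ≤ fwdA J hJ (π x.val) → π^[l] (π x.val) = π x.val + (l : Fin (m + 1)) :=
    iter_chain J π hπJ (π x.val) _ (fun l hl => fwd_min J hJ _ hl)
  refine ⟨fwdA J hJ (π x.val), ?_, ?_⟩
  · rw [happly, Function.iterate_succ_apply, hch _ le_rfl]
    rfl
  · intro l h1 h2
    have e : π^[l] x.val = π x.val + ((l - 1 : ℕ) : Fin (m + 1)) := by
      rw [(by omega : l = (l - 1) + 1), Function.iterate_succ_apply, hch _ (by omega),
        (by omega : l - 1 + 1 - 1 = l - 1)]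
    rw [e]
    exact fwd_min J hJ _ (by omega)

end Dyn

end DeletionBij

open DeletionBij Equiv Equiv.Perm Fin.NatCast Fin.CommRing in
theorem deletion_bijection {n k : ℕ} (J : Finset (Fin n))
    (hik : J.card + 1 ≤ k) (hk : 2 * k ≤ n)
    (σ' : Equiv.Perm {x : Fin n // x ∉ J})
    (hσ' : ∀ x : {x : Fin n // x ∉ J}, ∃ m : ℕ, 1 ≤ m ∧
      (σ' x : Fin n) = (⇑(finRotate n))^[m] x.val ∧
      ∀ l, 1 ≤ l → l < m → (⇑(finRotate n))^[l] x.val ∈ J) :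
    Nonempty
      ({α : Equiv.Perm (Fin n) //
          numCycles α = k ∧ IsCircular (α⁻¹ * finRotate n) ∧
          ∀ j ∈ J, (α⁻¹ * finRotate n) j = finRotate n j} ≃
        {α' : Equiv.Perm {x : Fin n // x ∉ J} //
          numCycles α' = k - J.card ∧ IsCircular (α'⁻¹ * σ')}) := by
  obtain ⟨m, rfl⟩ : ∃ m, n = m + 1 := ⟨n - 1, by omega⟩
  have hm1 : 1 ≤ m := by omega
  have hJ : ∃ y : Fin (m + 1), y ∉ J := by
    have hc : (Jᶜ : Finset (Fin (m + 1))).Nonempty := by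
      rw [← Finset.card_pos, Finset.card_compl, Fintype.card_fin]
      omega
    obtain ⟨y, hy⟩ := hc
    exact ⟨y, (Finset.mem_compl).mp hy⟩
  have hsize : ∃ a b : {x : Fin (m + 1) // x ∉ J}, a ≠ b := by
    have hlt : 1 < Fintype.card {x : Fin (m + 1) // x ∉ J} := by
      rw [Fintype.card_subtype_compl, Fintype.card_fin]
      have : Fintype.card {x : Fin (m + 1) // x ∈ J} = J.card := by simp
      rw [this]
      omega
    exact Fintype.exists_pair_of_one_lt_card hlt
  have hC3 : ∀ α : Equiv.Perm (Fin (m + 1)),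
      (∀ j ∈ J, (α⁻¹ * finRotate (m + 1)) j = finRotate (m + 1) j) ↔
        (∀ s ∈ S J, α s = s) := by
    intro α
    constructor
    · intro h s hs
      rw [mem_S] at hs
      have h2 := h (s - 1) hs
      rw [Perm.mul_apply, finRotate_succ_apply, (by ring : s - 1 + 1 = s)] at h2
      conv_lhs => rw [← h2]
      exact α.apply_symm_apply s
    · intro h j hj
      have hjS : j + 1 ∈ S J := by rw [mem_S]; simpa using hj
      rw [Perm.mul_apply, finRotate_succ_apply]
      have h2 := h _ hjS
      nth_rewrite 1 [← h2]
      exact α.symm_apply_apply _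
  have hπJ : ∀ α : Equiv.Perm (Fin (m + 1)), (∀ s ∈ S J, α s = s) →
      ∀ w ∈ J, (α⁻¹ * finRotate (m + 1)) w = w + 1 := by
    intro α hfix w hw
    have hwS : w + 1 ∈ S J := by rw [mem_S]; simpa using hw
    have hfw : α (w + 1) = w + 1 := hfix _ hwS
    show α⁻¹ (finRotate (m + 1) w) = w + 1
    rw [finRotate_succ_apply]
    conv_lhs => rw [← hfw]
    exact α.symm_apply_apply _
  refine ⟨⟨fun a => ⟨Fmap J hJ a.1 (hmem_of_hfix J ((hC3 a.1).mp a.2.2.2)), ?_, ?_⟩,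
    fun b => ⟨Gmap J hJ b.1, ?_, ?_, ?_⟩, ?_, ?_⟩⟩
  · -- numCycles of Fmap
    obtain ⟨α, hnum, hcirc, hc3⟩ := a
    have hfix := (hC3 α).mp hc3
    have hGF := Gmap_Fmap J hJ α (hmem_of_hfix J hfix) hfix
    have hNC := numCycles_Gmap J hJ (Fmap J hJ α (hmem_of_hfix J hfix))
    rw [hGF] at hNC
    simp only at hNC ⊢
    omega
  · -- circularity of Fmap side
    obtain ⟨α, hnum, hcirc, hc3⟩ := a
    have hfix := (hC3 α).mp hc3
    exact D1 J _ _ (char_main J hJ σ' hσ' α hfix (hmem_of_hfix J hfix)) hsize hcirc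
  · -- numCycles of Gmap
    obtain ⟨α', hnum, hcirc⟩ := b
    have hNC := numCycles_Gmap J hJ α'
    simp only at hNC ⊢
    omega
  · -- circularity of Gmap side
    obtain ⟨α', hnum, hcirc⟩ := b
    have hfix := Gmap_fixes_S J hJ α'
    have hα := hmem_of_hfix J hfix
    have hchar := char_main J hJ σ' hσ' (Gmap J hJ α') hfix hα
    have hcirc' : IsCircular ((Fmap J hJ (Gmap J hJ α') hα)⁻¹ * σ') := by
      rw [Fmap_Gmap J hJ α' hα]
      exact hcirc
    exact D2 J hJ hm1 _ _ hchar (hπJ _ hfix) hcirc'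
  · -- C3 of Gmap
    obtain ⟨α', hnum, hcirc⟩ := b
    exact (hC3 _).mpr (Gmap_fixes_S J hJ α')
  · -- left_inv
    intro a
    apply Subtype.ext
    exact Gmap_Fmap J hJ a.1 (hmem_of_hfix J ((hC3 a.1).mp a.2.2.2)) ((hC3 a.1).mp a.2.2.2)
  · -- right_inv
    intro b
    apply Subtype.ext
    exact Fmap_Gmap J hJ b.1 (hmem_of_hfix J (Gmap_fixes_S J hJ b.1))
end

section
/- The number of permutations α of {1,...,n} without fixed points such that α⁻¹·(1,2,...,n) is an n-cycle and such that the genus g defined by n + 2 − 2g = 1 + z(α) + 1 equals a given g ≥ 1 is r(n, n−2g); hence the total number u(g) of reduced unicellular hypermonopoles of genus g (over all n) equals ∑_{n=2g+1}^{4g} r(n, n−2g), and in particular this total is finite. -/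
lemma aux_bounds {n : ℕ} (α : Equiv.Perm (Fin n)) (hP : ∀ x, α x ≠ x)
    (hC : IsCircular (α⁻¹ * finRotate n)) :
    1 ≤ numCycles α ∧ 2 * numCycles α ≤ n := by
  obtain ⟨x, hx, -⟩ := hC.1
  have hn : 0 < n := x.pos
  have hsupp : α.support = Finset.univ :=
    Finset.eq_univ_iff_forall.mpr fun y => Equiv.Perm.mem_support.mpr (hP y)
  have hcard : α.support.card = n := by rw [hsupp, Finset.card_univ, Fintype.card_fin]
  have hnum : numCycles α = Multiset.card α.cycleType := by
    simp [numCycles, hcard, Fintype.card_fin]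
  have hne : α ≠ 1 := by
    intro h
    exact hP ⟨0, hn⟩ (by simp [h])
  have hpos : 0 < Multiset.card α.cycleType :=
    Equiv.Perm.card_cycleType_pos.mpr hne
  have hsum : α.cycleType.sum = n := by rw [Equiv.Perm.sum_cycleType, hcard]
  have hle : Multiset.card α.cycleType • 2 ≤ α.cycleType.sum :=
    Multiset.card_nsmul_le_sum fun x hx => Equiv.Perm.two_le_of_mem_cycleType hx
  rw [smul_eq_mul, hsum] at hle
  constructor
  · omega
  · omega

lemma aux_Icc (g : ℕ) (hg : 1 ≤ g) {n : ℕ} (α : Equiv.Perm (Fin n))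
    (h : (∀ x, α x ≠ x) ∧ IsCircular (α⁻¹ * finRotate n) ∧ n = numCycles α + 2 * g) :
    n ∈ Finset.Icc (2 * g + 1) (4 * g) := by
  obtain ⟨h1, h2⟩ := aux_bounds α h.1 h.2.1
  rw [Finset.mem_Icc]
  omega

lemma aux_count (g : ℕ) (hg : 1 ≤ g) (n : ℕ) :
    Nat.card {α : Equiv.Perm (Fin n) //
        (∀ x, α x ≠ x) ∧ IsCircular (α⁻¹ * finRotate n) ∧
        n = numCycles α + 2 * g} = r n (n - 2 * g) := by
  rw [r]
  apply Nat.card_congr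
  apply Equiv.subtypeEquivRight
  intro α
  constructor
  · rintro ⟨h1, h2, h3⟩
    exact ⟨h1, by omega, h2⟩
  · rintro ⟨h1, h2, h3⟩
    obtain ⟨hx, hy⟩ := aux_bounds α h1 h3
    exact ⟨h1, h3, by omega⟩

theorem count_by_genus (g : ℕ) (hg : 1 ≤ g) :
    (∀ n : ℕ,
      Nat.card {α : Equiv.Perm (Fin n) //
          (∀ x, α x ≠ x) ∧ IsCircular (α⁻¹ * finRotate n) ∧
          n = numCycles α + 2 * g} = r n (n - 2 * g)) ∧
    Finite (Σ n : ℕ, {α : Equiv.Perm (Fin n) //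
        (∀ x, α x ≠ x) ∧ IsCircular (α⁻¹ * finRotate n) ∧
        n = numCycles α + 2 * g}) ∧
    Nat.card (Σ n : ℕ, {α : Equiv.Perm (Fin n) //
        (∀ x, α x ≠ x) ∧ IsCircular (α⁻¹ * finRotate n) ∧
        n = numCycles α + 2 * g}) =
      ∑ n ∈ Finset.Icc (2 * g + 1) (4 * g), r n (n - 2 * g) := by
  classical
  set S : ℕ → Type := fun n => {α : Equiv.Perm (Fin n) //
        (∀ x, α x ≠ x) ∧ IsCircular (α⁻¹ * finRotate n) ∧
        n = numCycles α + 2 * g} with hS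
  have e : (Σ n : ℕ, S n) ≃ (Σ m : ↥(Finset.Icc (2 * g + 1) (4 * g)), S m) :=
    { toFun := fun x => ⟨⟨x.1, aux_Icc g hg x.2.1 x.2.2⟩, x.2⟩
      invFun := fun y => ⟨y.1.1, y.2⟩
      left_inv := fun x => rfl
      right_inv := fun y => rfl }
  have hfin : Finite (Σ n : ℕ, S n) := by
    haveI : ∀ m : ↥(Finset.Icc (2 * g + 1) (4 * g)), Finite (S m) := fun m =>
      Subtype.finite
    exact Finite.of_equiv _ e.symm
  refine ⟨aux_count g hg, hfin, ?_⟩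
  haveI : ∀ m : ℕ, Fintype (S m) := fun m => Subtype.fintype _
  rw [Nat.card_congr e, Nat.card_eq_fintype_card, Fintype.card_sigma]
  rw [← Finset.sum_coe_sort (Finset.Icc (2 * g + 1) (4 * g)) (fun n => r n (n - 2 * g))]
  congr 1
  ext m
  rw [← Nat.card_eq_fintype_card, aux_count g hg]
end

section
/- Let σ = (1,2,...,n) with n ≥ 3 and let α be a permutation with α⁻¹σ an n-cycle. If i is a fixed point of α, then the permutation π' on {1,...,n}\{i} obtained by deleting i from the cycle of π = α⁻¹σ coincides with α'⁻¹σ', where σ' is obtained from σ by deleting i and α' is the restriction of α to {1,...,n}\{i}. -/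
theorem deletion_commutes {n : ℕ} (hn : 3 ≤ n) (α : Equiv.Perm (Fin n))
    (i : Fin n) (hface : IsCircular (α⁻¹ * finRotate n)) (hfix : α i = i)
    (σ' α' π' : Equiv.Perm {j : Fin n // j ≠ i})
    (hσ' : ∀ j : {j : Fin n // j ≠ i},
      (σ' j : Fin n) = if finRotate n j.val = i
        then finRotate n (finRotate n j.val) else finRotate n j.val)
    (hα' : ∀ j : {j : Fin n // j ≠ i}, (α' j : Fin n) = α j.val)
    (hπ' : ∀ j : {j : Fin n // j ≠ i},
      (π' j : Fin n) = if (α⁻¹ * finRotate n) j.val = i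
        then (α⁻¹ * finRotate n) ((α⁻¹ * finRotate n) j.val)
        else (α⁻¹ * finRotate n) j.val) :
    π' = α'⁻¹ * σ' := by
  have hαinv : α⁻¹ i = i := by
    conv_lhs => rw [← hfix]
    simp
  have key : α' * π' = σ' := by
    ext j
    congr 1
    rw [Equiv.Perm.mul_apply, hα', hπ', hσ']
    have hcond : (α⁻¹ * finRotate n) (j : Fin n) = i ↔ finRotate n (j : Fin n) = i := by
      rw [Equiv.Perm.mul_apply, Equiv.Perm.inv_eq_iff_eq, hfix]
    by_cases h : finRotate n (j : Fin n) = i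
    · rw [if_pos (hcond.mpr h), if_pos h]
      simp [Equiv.Perm.mul_apply, h, hαinv]
    · rw [if_neg (fun hc => h (hcond.mp hc)), if_neg h]
      simp [Equiv.Perm.mul_apply]
  rw [eq_inv_mul_iff_mul_eq, key]
end
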